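/- arXiv:1812.01589 — 7 statements merged into one kernel-verified Lean document; each statement's English description precedes it below -/
import Mathlib

section
/- Let k ≥ 1, let n_1,…,n_k ≥ 1 and m_1,…,m_k ≥ 1 be integers, and let ε ∈ {1,−1}. Then the group G(n,m,ε) is infinite. -/
/-- The relators of the group `G(n,m,ε) = ⟨b_1,…,b_k, t | b_i^{n_i} = b_{i+1}^{m_{i+1}}
(1 ≤ i ≤ k−1), t⁻¹ b_k^{n_k} t = b_1^{ε m_1}⟩`, where the generator `some i` is `b_{i+1}`
and `none` is `t`. -/
def cycleRels (k : ℕ) (hk : 0 < k) (n m : Fin k → ℤ) (ε : ℤ) :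
    Set (FreeGroup (Option (Fin k))) :=
  {x | ∃ i j : Fin k, (i : ℕ) + 1 = (j : ℕ) ∧
      x = FreeGroup.of (some i) ^ n i * (FreeGroup.of (some j) ^ m j)⁻¹} ∪
  {(FreeGroup.of none)⁻¹ *
      FreeGroup.of (some ⟨k - 1, Nat.sub_lt hk Nat.one_pos⟩) ^
        n ⟨k - 1, Nat.sub_lt hk Nat.one_pos⟩ *
      FreeGroup.of none *
      (FreeGroup.of (some ⟨0, hk⟩) ^ (ε * m ⟨0, hk⟩))⁻¹}

theorem stmt0 (k : ℕ) (hk : 0 < k) (n m : Fin k → ℤ)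
    (hn : ∀ i, 1 ≤ n i) (hm : ∀ i, 1 ≤ m i) (ε : ℤ) (hε : ε = 1 ∨ ε = -1) :
    Infinite (PresentedGroup (cycleRels k hk n m ε)) := by
  -- map b_i ↦ 1, t ↦ ofAdd 1 into Multiplicative ℤ
  set f : Option (Fin k) → Multiplicative ℤ :=
    fun o => Option.elim o (Multiplicative.ofAdd 1) (fun _ => 1) with hf
  have hrels : ∀ r ∈ cycleRels k hk n m ε, FreeGroup.lift f r = 1 := by
    rintro r (⟨i, j, hij, rfl⟩ | rfl)
    · simp [hf]
    · simp [hf]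
  have hsurj : Function.Surjective (PresentedGroup.toGroup hrels) := by
    intro z
    refine ⟨(PresentedGroup.of (rels := cycleRels k hk n m ε) none) ^ z.toAdd, ?_⟩
    rw [map_zpow, PresentedGroup.toGroup.of]
    show Multiplicative.ofAdd 1 ^ z.toAdd = z
    rw [← ofAdd_zsmul, smul_eq_mul, mul_one, ofAdd_toAdd]
  exact Infinite.of_surjective _ hsurj
end

section
/- Let k ≥ 1, let n_1,…,n_k ≥ 1 and m_1,…,m_k ≥ 1 be integers, and let ε ∈ {1,−1}. Then the group G(n,m,ε) is not isomorphic to the infinite cyclic group ℤ. -/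
open Finset

section CycleWeight

variable {M : Type*} [CommMonoid M] {k : ℕ} (n m : Fin k → M)

def cycleWeight (i : Fin k) : M :=
  (∏ j ∈ Iio i, n j) * ∏ j ∈ Ioi i, m j

theorem mul_cycleWeight_of_succ_eq {i j : Fin k} (hij : (i : ℕ) + 1 = j) :
    n i * cycleWeight n m i = m j * cycleWeight n m j := by
  have hIio : Iio j = Iic i := by
    ext x; simp only [mem_Iio, mem_Iic, Fin.lt_def, Fin.le_def]; omega
  have hIoi : Ioi i = Ici j := by
    ext x; simp only [mem_Ioi, mem_Ici, Fin.lt_def, Fin.le_def]; omega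
  rw [cycleWeight, cycleWeight, ← mul_assoc, mul_prod_Iio_eq_prod_Iic, hIoi,
    ← mul_prod_Ioi_eq_prod_Ici, hIio]
  ac_rfl

theorem mul_cycleWeight_first (hk : 0 < k) :
    m ⟨0, hk⟩ * cycleWeight n m ⟨0, hk⟩ = ∏ j, m j := by
  have hIio : Iio (⟨0, hk⟩ : Fin k) = ∅ := by ext x; simp [Fin.lt_def]
  have hIci : Ici (⟨0, hk⟩ : Fin k) = univ := by ext x; simp [Fin.le_def]
  rw [cycleWeight, hIio, prod_empty, one_mul, mul_prod_Ioi_eq_prod_Ici, hIci]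

theorem mul_cycleWeight_last (hk : 0 < k) :
    n ⟨k - 1, Nat.sub_lt hk Nat.one_pos⟩ * cycleWeight n m ⟨k - 1, Nat.sub_lt hk Nat.one_pos⟩ =
      ∏ j, n j := by
  have hIoi : Ioi (⟨k - 1, Nat.sub_lt hk Nat.one_pos⟩ : Fin k) = ∅ := by
    ext x; simp only [mem_Ioi, Fin.lt_def, notMem_empty, iff_false]; omega
  have hIic : Iic (⟨k - 1, Nat.sub_lt hk Nat.one_pos⟩ : Fin k) = univ := by
    ext x; simp only [mem_Iic, Fin.le_def, mem_univ, iff_true]; omega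
  rw [cycleWeight, hIoi, prod_empty, mul_one, mul_prod_Iio_eq_prod_Iic, hIic]

theorem cycleWeight_ne_zero {M₀ : Type*} [CommMonoidWithZero M₀] [NoZeroDivisors M₀]
    [Nontrivial M₀] {n m : Fin k → M₀} (hn : ∀ i, n i ≠ 0) (hm : ∀ i, m i ≠ 0) (i : Fin k) :
    cycleWeight n m i ≠ 0 :=
  mul_ne_zero (prod_ne_zero_iff.mpr fun j _ => hn j) (prod_ne_zero_iff.mpr fun j _ => hm j)

end CycleWeight

theorem injective_of_ne_one_of_isCyclic {G H : Type*} [Group G] [IsCyclic G] [Group H]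
    [IsMulTorsionFree H] {f : G →* H} (hf : f ≠ 1) : Function.Injective f := by
  obtain ⟨g, hg⟩ := IsCyclic.exists_generator (α := G)
  have hfg : f g ≠ 1 := fun h => hf <| MonoidHom.ext fun x => by
    obtain ⟨a, rfl⟩ := Subgroup.mem_zpowers_iff.mp (hg x)
    simp [h]
  refine (injective_iff_map_eq_one f).mpr fun x hx => ?_
  obtain ⟨a, rfl⟩ := Subgroup.mem_zpowers_iff.mp (hg x)
  rw [map_zpow, IsMulTorsionFree.zpow_eq_one_iff_right hfg] at hx
  rw [hx, zpow_zero]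

section CycleGroup

variable {k : ℕ} (hk : 0 < k) (n m : Fin k → ℤ) (ε : ℤ)

theorem lift_eq_one_of_mem_cycleRels {G : Type*} [Group G] (T : G) (B : Fin k → G)
    (hB : ∀ i j : Fin k, (i : ℕ) + 1 = j → B i ^ n i = B j ^ m j)
    (hT : T⁻¹ * B ⟨k - 1, Nat.sub_lt hk Nat.one_pos⟩ ^ n ⟨k - 1, Nat.sub_lt hk Nat.one_pos⟩ * T
      = B ⟨0, hk⟩ ^ (ε * m ⟨0, hk⟩)) :
    ∀ r ∈ cycleRels k hk n m ε, FreeGroup.lift (fun o => o.elim T B) r = 1 := by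
  rintro r (⟨i, j, hij, rfl⟩ | rfl)
  · simp [hB i j hij]
  · simp only [map_mul, map_inv, map_zpow, FreeGroup.lift_apply_of, Option.elim, ← hT]
    group

theorem exists_hom_toInt :
    ∃ χ : PresentedGroup (cycleRels k hk n m ε) →* Multiplicative ℤ,
      χ (.of none) = .ofAdd 1 ∧ ∀ i, χ (.of (some i)) = 1 :=
  ⟨PresentedGroup.toGroup (lift_eq_one_of_mem_cycleRels hk n m ε _ _ (by simp) (by simp)),
    PresentedGroup.toGroup.of _, fun _ => PresentedGroup.toGroup.of _⟩

theorem exists_hom_toPermRat (hn : ∀ i, n i ≠ 0) (hm : ∀ i, m i ≠ 0) (hε : ε ≠ 0) :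
    ∃ φ : PresentedGroup (cycleRels k hk n m ε) →* Equiv.Perm ℚ, ∀ i, φ (.of (some i)) =
      Equiv.addRight (cycleWeight (fun j => (n j : ℚ)) (fun j => (m j : ℚ)) i) := by
  have hN : ∏ j, (n j : ℚ) ≠ 0 := prod_ne_zero_iff.mpr fun j _ => by exact_mod_cast hn j
  have hM : ∏ j, (m j : ℚ) ≠ 0 := prod_ne_zero_iff.mpr fun j _ => by exact_mod_cast hm j
  have hεQ : (ε : ℚ) ≠ 0 := by exact_mod_cast hε
  have hrels := lift_eq_one_of_mem_cycleRels hk n m ε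
    (Equiv.mulLeft₀ _ (div_ne_zero hN (mul_ne_zero hεQ hM)))
    (fun i => Equiv.addRight (cycleWeight (fun j => (n j : ℚ)) (fun j => (m j : ℚ)) i))
    (fun i j hij => by
      rw [Equiv.zsmul_addRight, Equiv.zsmul_addRight, zsmul_eq_mul, zsmul_eq_mul,
        mul_cycleWeight_of_succ_eq (fun j => (n j : ℚ)) _ hij])
    (by
      ext x
      simp only [Equiv.Perm.mul_apply, Equiv.zsmul_addRight, zsmul_eq_mul, Equiv.coe_addRight,
        Equiv.mulLeft₀_apply, Equiv.Perm.coe_inv, Equiv.mulLeft₀_symm_apply]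
      rw [mul_cycleWeight_last (fun j => (n j : ℚ)) _ hk, Int.cast_mul, mul_assoc,
        mul_cycleWeight_first _ (fun j => (m j : ℚ)) hk]
      field_simp)
  exact ⟨PresentedGroup.toGroup hrels, fun _ => PresentedGroup.toGroup.of _⟩

theorem of_some_ne_one (hn : ∀ i, n i ≠ 0) (hm : ∀ i, m i ≠ 0) (hε : ε ≠ 0) (i : Fin k) :
    (PresentedGroup.of (some i) : PresentedGroup (cycleRels k hk n m ε)) ≠ 1 := by
  obtain ⟨φ, hφ⟩ := exists_hom_toPermRat hk n m ε hn hm hε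
  intro h
  have h0 := congrArg (fun g => φ g 0) h
  simp only [hφ, map_one, Equiv.coe_addRight, zero_add, Equiv.Perm.one_apply] at h0
  exact cycleWeight_ne_zero (by exact_mod_cast hn) (by exact_mod_cast hm) i h0

end CycleGroup

theorem stmt1 (k : ℕ) (hk : 0 < k) (n m : Fin k → ℤ)
    (hn : ∀ i, 1 ≤ n i) (hm : ∀ i, 1 ≤ m i) (ε : ℤ) (hε : ε = 1 ∨ ε = -1) :
    ¬ Nonempty (PresentedGroup (cycleRels k hk n m ε) ≃* Multiplicative ℤ) := by
  rintro ⟨e⟩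
  have : IsCyclic (PresentedGroup (cycleRels k hk n m ε)) :=
    isCyclic_of_surjective e.symm e.symm.surjective
  obtain ⟨χ, hχt, hχb⟩ := exists_hom_toInt hk n m ε
  have hχ : χ ≠ 1 := fun h => by simp [h, eq_comm (a := (1 : Multiplicative ℤ))] at hχt
  have hb : PresentedGroup.of (some ⟨0, hk⟩) = (1 : PresentedGroup (cycleRels k hk n m ε)) :=
    injective_of_ne_one_of_isCyclic hχ (by rw [hχb, map_one])
  refine of_some_ne_one hk n m ε (fun i => (one_pos.trans_le (hn i)).ne')
    (fun i => (one_pos.trans_le (hm i)).ne') ?_ ⟨0, hk⟩ hb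
  rintro rfl
  simp at hε
end

section
/- Let k ≥ 1 and let n_1,…,n_k ≥ 1 and m_1,…,m_k ≥ 1 be integers. In the group B_k = ⟨b_1,…,b_k | b_i^{n_i} = b_{i+1}^{m_{i+1}} for 1 ≤ i ≤ k−1⟩, the group B_k is nontrivial and the elements b_1^{m_1} and b_k^{n_k} have infinite order. -/
/-!
Send `b_i` to the integer `w_i = (∏_{l<i} n_l)(∏_{l>i} m_l)` in `(ℤ, +)`. For consecutive
`i, i+1` both `n_i w_i` and `m_{i+1} w_{i+1}` equal `(∏_{l≤i} n_l)(∏_{l>i} m_l)`, so every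
relator dies and this is a homomorphism `B_k → ℤ`. As all `n_l, m_l` are nonzero, it maps
`b_i^e` (`e ≠ 0`) to a nonzero element of the torsion-free group `ℤ`, so `b_i^e` has infinite order.
-/

/-- The relators of the group `B_k = ⟨b_1,…,b_k | b_i^{n_i} = b_{i+1}^{m_{i+1}}
(1 ≤ i ≤ k−1)⟩`, where the generator `i : Fin k` is `b_{i+1}`. -/
def chainRels (k : ℕ) (n m : Fin k → ℤ) : Set (FreeGroup (Fin k)) :=
  {x | ∃ i j : Fin k, (i : ℕ) + 1 = (j : ℕ) ∧
      x = FreeGroup.of i ^ n i * (FreeGroup.of j ^ m j)⁻¹}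

open Finset

section ChainWeight

variable {k : ℕ} (n m : Fin k → ℤ)

def chainWeight (i : Fin k) : ℤ :=
  (∏ l ∈ Iio i, n l) * ∏ l ∈ Ioi i, m l

lemma chainWeight_ne_zero (hn : ∀ i, n i ≠ 0) (hm : ∀ i, m i ≠ 0) (i : Fin k) :
    chainWeight n m i ≠ 0 :=
  mul_ne_zero (prod_ne_zero_iff.2 fun l _ => hn l) (prod_ne_zero_iff.2 fun l _ => hm l)

lemma mul_chainWeight_eq {i j : Fin k} (hij : (i : ℕ) + 1 = j) :
    n i * chainWeight n m i = m j * chainWeight n m j := by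
  have hIio : Iio j = Iic i := by ext l; simp only [mem_Iio, mem_Iic, Fin.lt_def, Fin.le_def]; omega
  have hIoi : Ioi i = Ici j := by ext l; simp only [mem_Ioi, mem_Ici, Fin.lt_def, Fin.le_def]; omega
  rw [chainWeight, chainWeight, hIio, hIoi, ← mul_prod_Iio_eq_prod_Iic,
    ← mul_prod_Ioi_eq_prod_Ici]
  ring

def chainWeightHom : PresentedGroup (chainRels k n m) →* Multiplicative ℤ :=
  PresentedGroup.toGroup (f := fun i => Multiplicative.ofAdd (chainWeight n m i)) <| by
    rintro _ ⟨i, j, hij, rfl⟩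
    simp only [map_mul, map_zpow, map_inv, FreeGroup.lift_apply_of, ← ofAdd_zsmul,
      mul_inv_eq_one, smul_eq_mul, mul_chainWeight_eq n m hij]

lemma chainWeightHom_of (i : Fin k) :
    chainWeightHom n m (PresentedGroup.of i) = Multiplicative.ofAdd (chainWeight n m i) :=
  PresentedGroup.toGroup.of _

lemma not_isOfFinOrder_chainRels_of_zpow (hn : ∀ i, n i ≠ 0) (hm : ∀ i, m i ≠ 0) (i : Fin k) {e : ℤ}
    (he : e ≠ 0) : ¬ IsOfFinOrder (PresentedGroup.of (rels := chainRels k n m) i ^ e) := by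
  intro hfin
  have h := (chainWeightHom n m).isOfFinOrder hfin
  rw [isOfFinOrder_iff_eq_one, map_zpow, chainWeightHom_of, ← ofAdd_zsmul, ofAdd_eq_one,
    smul_eq_mul] at h
  exact mul_ne_zero he (chainWeight_ne_zero n m hn hm i) h

end ChainWeight

theorem stmt2 (k : ℕ) (hk : 0 < k) (n m : Fin k → ℤ)
    (hn : ∀ i, 1 ≤ n i) (hm : ∀ i, 1 ≤ m i) :
    Nontrivial (PresentedGroup (chainRels k n m)) ∧
    ¬ IsOfFinOrder
      ((PresentedGroup.of (rels := chainRels k n m) ⟨0, hk⟩) ^ m ⟨0, hk⟩) ∧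
    ¬ IsOfFinOrder
      ((PresentedGroup.of (rels := chainRels k n m) ⟨k - 1, Nat.sub_lt hk Nat.one_pos⟩) ^
        n ⟨k - 1, Nat.sub_lt hk Nat.one_pos⟩) := by
  have hn' : ∀ i, n i ≠ 0 := fun i => (one_pos.trans_le (hn i)).ne'
  have hm' : ∀ i, m i ≠ 0 := fun i => (one_pos.trans_le (hm i)).ne'
  have hfirst := not_isOfFinOrder_chainRels_of_zpow n m hn' hm' ⟨0, hk⟩ (hm' ⟨0, hk⟩)
  have hfirst_ne_one : PresentedGroup.of (rels := chainRels k n m) ⟨0, hk⟩ ^ m ⟨0, hk⟩ ≠ 1 :=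
    fun h => hfirst (h ▸ IsOfFinOrder.one)
  exact ⟨nontrivial_of_ne _ _ hfirst_ne_one, hfirst,
    not_isOfFinOrder_chainRels_of_zpow n m hn' hm' _ (hn' _)⟩
end

section
/- Let n ≥ 2 and let p_1,…,p_n, q_1,…,q_n, r_1,…,r_n be natural numbers with r_i ≥ 1 for all i. Let M be the 2n×n integer matrix obtained by stacking the diagonal matrix A with A_{ii} = 2^{r_i} on top of the matrix B with B_{ii} = 2^{p_i}, B_{i,i+1} = −2^{q_i} for 1 ≤ i ≤ n−1, B_{n,1} = −2^{q_n}, and all other entries 0. Then the ℤ-submodule of ℤⁿ spanned by the rows of M equals all of ℤⁿ if and only if exactly one of the two sums p_1 + ⋯ + p_n and q_1 + ⋯ + q_n equals 0. -/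
/-!
Write `B = echinusB n p q`. By `adj B * B = det B • 1`, the row span of `B` contains
`det B • eᵢ`, while the diagonal block contributes `2 ^ rᵢ • eᵢ`. In the Leibniz expansion of
`det B` only the identity and the cyclic rotation survive, so `det B = 2 ^ ∑ p - 2 ^ ∑ q`, which is
odd exactly when one of the two sums vanishes. When it is odd it is coprime to `2 ^ rᵢ`, so every
`eᵢ` lies in the span. Conversely, reduction mod 2 kills the diagonal block (as `rᵢ ≥ 1`), so the
rows of `B` mod 2 span `(ZMod 2)ⁿ`; hence `B` is invertible mod 2 and `det B` is odd.
-/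

/-- The matrix `B` with `B_{ii} = 2^{p_i}`, `B_{i,i+1} = −2^{q_i}` for `1 ≤ i ≤ n−1`,
`B_{n,1} = −2^{q_n}`, and all other entries `0` (indices shifted down by one). -/
def echinusB (n : ℕ) (p q : Fin n → ℕ) : Matrix (Fin n) (Fin n) ℤ :=
  Matrix.of fun i j =>
    if i = j then (2 : ℤ) ^ p i
    else if (i : ℕ) + 1 = (j : ℕ) then -(2 : ℤ) ^ q i
    else if (i : ℕ) = n - 1 ∧ (j : ℕ) = 0 then -(2 : ℤ) ^ q i
    else 0

open Matrix

theorem Submodule.mem_of_smul_mem_of_isCoprime {R M : Type*} [CommRing R] [AddCommGroup M]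
    [Module R M] {S : Submodule R M} {x : M} {a b : R} (hab : IsCoprime a b)
    (ha : a • x ∈ S) (hb : b • x ∈ S) : x ∈ S := by
  obtain ⟨u, v, huv⟩ := hab
  simpa [smul_smul, ← add_smul, huv] using S.add_mem (S.smul_mem u ha) (S.smul_mem v hb)

theorem Int.odd_two_pow_sub_two_pow_iff {a b : ℕ} :
    Odd ((2 : ℤ) ^ a - 2 ^ b) ↔ (a = 0 ∧ b ≠ 0) ∨ (a ≠ 0 ∧ b = 0) := by
  simp [Int.odd_sub, Int.odd_pow, Int.even_pow, Int.not_odd_iff_even.2 even_two]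
  tauto

namespace Fin

theorem eq_add_one_iff {n : ℕ} {i j : Fin (n + 1)} :
    j = i + 1 ↔ (i : ℕ) + 1 = j ∨ (i : ℕ) = n ∧ (j : ℕ) = 0 := by
  rw [Fin.ext_iff, Fin.val_add_one]
  split_ifs with h <;> simp [Fin.ext_iff] at h <;> omega

open Fin.NatCast in
theorem forall_of_imp_add_one {n : ℕ} [NeZero n] {P : Fin n → Prop} {i₀ : Fin n}
    (h₀ : P i₀) (h : ∀ i, P i → P (i + 1)) (j : Fin n) : P j := by
  have hk : ∀ k : ℕ, P (i₀ + k) := by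
    intro k
    induction k with
    | zero => simpa using h₀
    | succ k ih => simpa [add_assoc] using h _ ih
  simpa using hk (j - i₀).val

end Fin

theorem Equiv.Perm.eq_one_or_eq_finRotate {n : ℕ} (σ : Equiv.Perm (Fin (n + 2)))
    (h : ∀ i, σ i = i ∨ σ i = i + 1) : σ = 1 ∨ σ = finRotate (n + 2) := by
  by_cases hrot : ∃ j, σ j = j + 1
  · obtain ⟨j, hj⟩ := hrot
    refine Or.inr (Equiv.ext (Fin.forall_of_imp_add_one (P := fun i => σ i = finRotate _ i)
      (by simpa using hj) fun i hi => ?_))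
    rw [finRotate_apply] at hi ⊢
    refine (h (i + 1)).resolve_left fun hfix => ?_
    simpa using σ.injective (hi.trans hfix.symm)
  · push Not at hrot
    exact Or.inl (Equiv.ext fun i => (h i).resolve_right (hrot i))

namespace Matrix

variable {ι κ R : Type*} [Fintype ι] [DecidableEq ι] [CommRing R]

theorem det_smul_single_mem_span_range (B : Matrix ι ι R) (i : ι) :
    B.det • Pi.single i 1 ∈ Submodule.span R (Set.range B) := by
  change _ ∈ Submodule.span R (Set.range B.row)
  rw [← range_vecMulLinear]
  refine ⟨adjugate B i, funext fun j => ?_⟩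
  simp [← mul_apply_eq_vecMul, adjugate_mul, one_apply, Pi.single_apply, eq_comm]

theorem span_range_fromRows_diagonal_eq_top {d : ι → R} (B : Matrix ι ι R)
    (h : ∀ i, IsCoprime B.det (d i)) :
    Submodule.span R (Set.range (fromRows (diagonal d) B)) = ⊤ := by
  rw [eq_top_iff, ← (Pi.basisFun R ι).span_eq, Submodule.span_le]
  rintro _ ⟨i, rfl⟩
  rw [Pi.basisFun_apply]
  refine Submodule.mem_of_smul_mem_of_isCoprime (h i) ?_ (Submodule.subset_span ⟨Sum.inl i, ?_⟩)
  · refine Submodule.span_mono ?_ (det_smul_single_mem_span_range B i)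
    rintro _ ⟨j, rfl⟩
    exact ⟨Sum.inr j, rfl⟩
  · ext j
    simp [diagonal_apply, Pi.single_apply, eq_comm]

theorem isUnit_map_det_of_span_range_fromRows_eq_top [Fintype κ] {S : Type*} [CommRing S]
    {f : R →+* S} (hf : Function.Surjective f) {D : Matrix κ ι R} (hD : D.map f = 0)
    (B : Matrix ι ι R) (h : Submodule.span R (Set.range (fromRows D B)) = ⊤) :
    IsUnit (f B.det) := by
  rw [RingHom.map_det, ← isUnit_iff_isUnit_det, RingHom.mapMatrix_apply,
    ← vecMul_surjective_iff_isUnit]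
  have hsurj : Function.Surjective (fromRows D B).vecMul := by
    rw [← coe_vecMulLinear, ← LinearMap.range_eq_top, range_vecMulLinear]
    exact h
  intro w
  obtain ⟨w', rfl⟩ := hf.comp_left w
  obtain ⟨v, rfl⟩ := hsurj w'
  refine ⟨f ∘ v ∘ Sum.inr, funext fun j => ?_⟩
  simp [RingHom.map_vecMul, hD]

def cyclicBidiagonal {n : ℕ} [NeZero n] (a b : Fin n → R) : Matrix (Fin n) (Fin n) R :=
  of fun i => Pi.single i (a i) - Pi.single (i + 1) (b i)

theorem det_cyclicBidiagonal {n : ℕ} (a b : Fin (n + 2) → R) :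
    (cyclicBidiagonal a b).det = ∏ i, a i - ∏ i, b i := by
  have hdiag : ∀ i, cyclicBidiagonal a b i i = a i := by simp [cyclicBidiagonal]
  have hsucc : ∀ i, cyclicBidiagonal a b i (i + 1) = -b i := by simp [cyclicBidiagonal]
  have hzero : ∀ i j, j ≠ i → j ≠ i + 1 → cyclicBidiagonal a b i j = 0 := by
    intro i j h₁ h₂
    simp [cyclicBidiagonal, h₁, h₂]
  rw [← det_transpose, det_apply, Finset.sum_eq_add_of_mem 1 (finRotate (n + 2))
    (Finset.mem_univ _) (Finset.mem_univ _) ?rot_ne ?vanish]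
  case rot_ne => simp [Equiv.ext_iff]
  case vanish =>
    rintro σ - ⟨h₁, h₂⟩
    obtain ⟨i, hi₁, hi₂⟩ : ∃ i, σ i ≠ i ∧ σ i ≠ i + 1 := by
      by_contra! h
      exact (σ.eq_one_or_eq_finRotate fun i => or_iff_not_imp_left.2 (h i)).elim h₁ h₂
    rw [Finset.prod_eq_zero (Finset.mem_univ i) (hzero i (σ i) hi₁ hi₂), smul_zero]
  simp only [Equiv.Perm.sign_one, Equiv.Perm.coe_one, id_eq, transpose_apply, hdiag, one_smul,
    sign_finRotate, Nat.add_one_sub_one, finRotate_apply, hsucc, Finset.prod_neg,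
    Finset.card_univ, Fintype.card_fin, Units.smul_def]
  have hsign : ((-1) ^ (n + 1) * (-1) ^ (n + 2) : R) = -1 := by
    rw [← pow_add, show n + 1 + (n + 2) = 2 * (n + 1) + 1 by ring, pow_succ, pow_mul]
    simp
  push_cast
  linear_combination (∏ i, b i) * hsign

end Matrix

theorem echinusB_eq_cyclicBidiagonal {n : ℕ} (p q : Fin (n + 2) → ℕ) :
    echinusB (n + 2) p q = cyclicBidiagonal (fun i => 2 ^ p i) (fun i => 2 ^ q i) := by
  ext i j
  by_cases hij : i = j
  · subst hij
    simp [echinusB, cyclicBidiagonal]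
  · have hsucc := Fin.eq_add_one_iff (i := i) (j := j)
    simp only [echinusB, cyclicBidiagonal, of_apply, Pi.sub_apply, Pi.single_apply, if_neg hij,
      Ne.symm hij]
    split_ifs <;> simp_all

theorem stmt7 (n : ℕ) (hn : 2 ≤ n) (p q r : Fin n → ℕ) (hr : ∀ i, 1 ≤ r i) :
    Submodule.span ℤ (Set.range fun i =>
        Matrix.fromRows (Matrix.diagonal fun i => (2 : ℤ) ^ r i) (echinusB n p q) i) = ⊤ ↔
      ((∑ i, p i = 0 ∧ ∑ i, q i ≠ 0) ∨ (∑ i, p i ≠ 0 ∧ ∑ i, q i = 0)) := by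
  obtain ⟨n, rfl⟩ := Nat.exists_eq_add_of_le' hn
  have hdet : (echinusB (n + 2) p q).det = 2 ^ ∑ i, p i - 2 ^ ∑ i, q i := by
    rw [echinusB_eq_cyclicBidiagonal, det_cyclicBidiagonal, Finset.prod_pow_eq_pow_sum,
      Finset.prod_pow_eq_pow_sum]
  rw [← Int.odd_two_pow_sub_two_pow_iff, ← hdet]
  constructor
  · intro h
    have hD : (diagonal fun i => (2 : ℤ) ^ r i).map (Int.castRingHom (ZMod 2)) = 0 := by
      ext i j
      simp [diagonal_apply, (by decide : (2 : ZMod 2) = 0), Nat.one_le_iff_ne_zero.1 (hr i)]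
    simpa [ZMod.intCast_eq_one_iff_odd] using
      isUnit_map_det_of_span_range_fromRows_eq_top ZMod.intCast_surjective hD _ h
  · intro h
    exact span_range_fromRows_diagonal_eq_top _ fun i => (Int.isCoprime_two_right.2 h).pow_right
end

section
/- Let r and m be natural numbers with 1 ≤ r ≤ m. Then the group with presentation ⟨b, t | b^{2^r} = 1, t^{−1} b^{2^m} t = b⟩ is isomorphic to the infinite cyclic group ℤ. -/
/-! Since `2 ^ r ∣ 2 ^ m`, the first relation gives `b ^ (2 ^ m) = 1`, so the second one reads
`t⁻¹ t = b`, i.e. `b = 1`. The group is then generated by `t` subject to no relation, and the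
map sending `b ↦ 0`, `t ↦ 1 ∈ ℤ` is an isomorphism onto `ℤ`. -/

/-- The relators of the group `⟨b, t | b^{2^r} = 1, t⁻¹ b^{2^m} t = b⟩`,
where `true` is `b` and `false` is `t`. -/
def twoGenRels (r m : ℕ) : Set (FreeGroup Bool) :=
  {FreeGroup.of true ^ 2 ^ r,
    (FreeGroup.of false)⁻¹ * FreeGroup.of true ^ 2 ^ m * FreeGroup.of false *
      (FreeGroup.of true)⁻¹}

abbrev tExponent : FreeGroup Bool →* Multiplicative ℤ :=
  FreeGroup.lift fun x => if x then 1 else Multiplicative.ofAdd 1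

lemma eq_one_of_pow_eq_one_of_conj_pow_eq {G : Type*} [Group G] {b t : G} {n k : ℕ}
    (hn : b ^ n = 1) (hnk : n ∣ k) (hconj : t⁻¹ * b ^ k * t = b) : b = 1 := by
  obtain ⟨j, rfl⟩ := hnk
  rw [pow_mul, hn, one_pow, mul_one, inv_mul_cancel] at hconj
  exact hconj.symm

def PresentedGroup.mulEquivIntOfOfTrueEqOne {rels : Set (FreeGroup Bool)}
    (hrels : ∀ w ∈ rels, tExponent w = 1)
    (hb : (PresentedGroup.of true : PresentedGroup rels) = 1) :
    PresentedGroup rels ≃* Multiplicative ℤ :=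
  MonoidHom.toMulEquiv (PresentedGroup.toGroup hrels) (zpowersHom _ (PresentedGroup.of false))
    (PresentedGroup.ext fun x => by
      cases x <;> simp [PresentedGroup.toGroup.of, hb])
    (by ext; simp [PresentedGroup.toGroup.of])

lemma tExponent_eq_one_of_mem_twoGenRels {r m : ℕ} {w : FreeGroup Bool}
    (hw : w ∈ twoGenRels r m) : tExponent w = 1 := by
  rcases hw with rfl | rfl <;> simp [tExponent]

lemma twoGenRels_of_true_eq_one {r m : ℕ} (hrm : r ≤ m) :
    (PresentedGroup.of true : PresentedGroup (twoGenRels r m)) = 1 := by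
  have hpow := PresentedGroup.one_of_mem (rels := twoGenRels r m) (Or.inl rfl)
  have hconj := PresentedGroup.one_of_mem (rels := twoGenRels r m) (Or.inr rfl)
  simp only [map_pow, map_mul, map_inv, mul_inv_eq_one] at hpow hconj
  exact eq_one_of_pow_eq_one_of_conj_pow_eq hpow (Nat.pow_dvd_pow 2 hrm) hconj

theorem stmt11_general (r m : ℕ) (h2 : r ≤ m) :
    Nonempty (PresentedGroup (twoGenRels r m) ≃* Multiplicative ℤ) :=
  ⟨PresentedGroup.mulEquivIntOfOfTrueEqOne (fun _ => tExponent_eq_one_of_mem_twoGenRels)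
    (twoGenRels_of_true_eq_one h2)⟩

theorem stmt11 (r m : ℕ) (h1 : 1 ≤ r) (h2 : r ≤ m) :
    Nonempty (PresentedGroup (twoGenRels r m) ≃* Multiplicative ℤ) :=
  stmt11_general r m h2
end

section
/- Let r and m be natural numbers with r > m ≥ 1. Then the group with presentation ⟨b, t | b^{2^r} = 1, t^{−1} b^{2^m} t = b⟩ is isomorphic to the group with presentation ⟨b, t | b^{2^{r−m}} = 1, t^{−1} b^{2^m} t = b⟩. -/
theorem stmt12 (r m : ℕ) (h1 : 1 ≤ m) (h2 : m < r) :
    Nonempty (PresentedGroup (twoGenRels r m) ≃* PresentedGroup (twoGenRels (r - m) m)) := by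
  have hm : m ≤ r := h2.le
  have hpow : 2 ^ (r - m) * 2 ^ m = 2 ^ r := by
    rw [← pow_add, Nat.sub_add_cancel hm]
  refine ⟨QuotientGroup.quotientMulEquivOfEq ?_⟩
  apply le_antisymm
  · -- N(rels r m) ≤ N(rels (r-m) m)
    apply Subgroup.normalClosure_le_normal
    rintro x (rfl | rfl)
    · show FreeGroup.of true ^ 2 ^ r ∈ _
      rw [← hpow, pow_mul]
      exact pow_mem (Subgroup.subset_normalClosure (Set.mem_insert _ _)) _
    · exact Subgroup.subset_normalClosure (Set.mem_insert_of_mem _ rfl)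
  · -- N(rels (r-m) m) ≤ N(rels r m)
    apply Subgroup.normalClosure_le_normal
    set N := Subgroup.normalClosure (twoGenRels r m)
    rintro x (rfl | rfl)
    · show FreeGroup.of true ^ 2 ^ (r - m) ∈ N
      rw [← QuotientGroup.eq_one_iff]
      set B : FreeGroup Bool ⧸ N := ↑(FreeGroup.of true)
      set T : FreeGroup Bool ⧸ N := ↑(FreeGroup.of false)
      have hb : B ^ 2 ^ r = 1 := by
        rw [← QuotientGroup.mk_pow, QuotientGroup.eq_one_iff]
        exact Subgroup.subset_normalClosure (Set.mem_insert _ _)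
      have ht : T⁻¹ * B ^ 2 ^ m * T * B⁻¹ = 1 := by
        rw [← QuotientGroup.mk_inv, ← QuotientGroup.mk_pow, ← QuotientGroup.mk_inv,
          ← QuotientGroup.mk_mul, ← QuotientGroup.mk_mul, ← QuotientGroup.mk_mul,
          QuotientGroup.eq_one_iff]
        exact Subgroup.subset_normalClosure (Set.mem_insert_of_mem _ rfl)
      have hB : B = T⁻¹ * B ^ 2 ^ m * T := by
        have := mul_eq_one_iff_eq_inv.mp ht
        rw [this, inv_inv]
      have : B ^ 2 ^ (r - m) = 1 := by
        calc B ^ 2 ^ (r - m) = (T⁻¹ * B ^ 2 ^ m * T) ^ 2 ^ (r - m) := by rw [← hB]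
        _ = T⁻¹ * (B ^ 2 ^ m) ^ 2 ^ (r - m) * T := by
              rw [show (T:FreeGroup Bool ⧸ N)⁻¹ * B ^ 2 ^ m * T
                    = T⁻¹ * B ^ 2 ^ m * T⁻¹⁻¹ by rw [inv_inv], conj_pow, inv_inv]
        _ = T⁻¹ * B ^ 2 ^ r * T := by rw [← pow_mul, mul_comm (2 ^ m), hpow]
        _ = 1 := by rw [hb, mul_one, inv_mul_cancel]
      rw [QuotientGroup.mk_pow]
      exact this
    · exact Subgroup.subset_normalClosure (Set.mem_insert_of_mem _ rfl)
end

section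
/- Let n ≥ 2 and let p_1,…,p_n and q_1,…,q_n be natural numbers. Let D = 2·I_n be the n×n diagonal matrix with all diagonal entries 2, and let F be the n×n integer matrix with F_{ii} = 2^{p_i}, F_{i,i+1} = −2^{q_i} for 1 ≤ i ≤ n−1, F_{n,1} = +2^{q_n}, and all other entries 0. Then the ℤ-submodule of ℤⁿ spanned by the rows of the 2n×n matrix obtained by stacking D on top of F equals all of ℤⁿ if and only if exactly one of the two sums p_1 + ⋯ + p_n and q_1 + ⋯ + q_n equals 0. -/
/-!
Stacking `c • 1` on top of a square matrix `M` gives rows spanning `Rⁿ` exactly when `M` is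
invertible modulo `c`, i.e. when `c` and `det M` are coprime: a left inverse `B₁ (c • 1) + B₂ M = 1`
gives `det B₂ · det M ≡ 1 (mod c)`, and conversely `a c + b det M = 1` yields the left inverse
`(a • 1, b • adj M)`. For `c = 2` this asks for `det F` to be odd. Expanding along the first
column, only the entries `F₀₀ = 2^{p₀}` and `F_{n-1,0} = 2^{q_{n-1}}` survive, with triangular
minors, so `det F = 2^{Σp} + 2^{Σq}`, which is odd iff exactly one exponent vanishes.
-/

/-- The matrix `F` with `F_{ii} = 2^{p_i}`, `F_{i,i+1} = −2^{q_i}` for `1 ≤ i ≤ n−1`,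
`F_{n,1} = +2^{q_n}`, and all other entries `0` (indices shifted down by one). -/
def echinusF (n : ℕ) (p q : Fin n → ℕ) : Matrix (Fin n) (Fin n) ℤ :=
  Matrix.of fun i j =>
    if i = j then (2 : ℤ) ^ p i
    else if (i : ℕ) + 1 = (j : ℕ) then -(2 : ℤ) ^ q i
    else if (i : ℕ) = n - 1 ∧ (j : ℕ) = 0 then (2 : ℤ) ^ q i
    else 0

open Matrix Submodule Set

namespace Matrix

variable {m n R : Type*} [CommRing R] [Fintype n] [DecidableEq n]

theorem span_range_eq_top_iff_exists_mul_eq_one [Fintype m] (A : Matrix m n R) :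
    span R (range A.row) = ⊤ ↔ ∃ B : Matrix n m R, B * A = 1 := by
  rw [← vecMul_surjective_iff_exists_left_inverse, ← range_vecMulLinear, LinearMap.range_eq_top]
  rfl

theorem dvd_det_one_add_smul_sub_one (c : R) (A : Matrix n n R) :
    c ∣ (1 + c • A).det - 1 := by
  let π := Ideal.Quotient.mk (Ideal.span {c})
  have hc : π c = 0 := Ideal.Quotient.eq_zero_iff_mem.2 (Ideal.mem_span_singleton_self c)
  have hmap : π.mapMatrix (1 + c • A) = 1 := by
    ext i j
    simp [one_apply, hc]
  rw [← Ideal.mem_span_singleton, ← Ideal.Quotient.eq_zero_iff_mem, map_sub, map_one,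
    RingHom.map_det, hmap, det_one, sub_self]

theorem exists_smul_add_mul_eq_one_iff_isCoprime (c : R) (M : Matrix n n R) :
    (∃ B₁ B₂ : Matrix n n R, c • B₁ + B₂ * M = 1) ↔ IsCoprime c M.det := by
  constructor
  · rintro ⟨B₁, B₂, h⟩
    obtain ⟨x, hx⟩ := dvd_det_one_add_smul_sub_one c (-B₁)
    have : B₂.det * M.det = (1 + c • -B₁).det := by
      rw [← det_mul, eq_sub_of_add_eq' h, smul_neg, sub_eq_add_neg]
    exact ⟨-x, B₂.det, by linear_combination this + hx⟩
  · rintro ⟨a, b, hab⟩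
    refine ⟨a • 1, b • M.adjugate, ?_⟩
    rw [smul_mul_assoc, adjugate_mul, smul_smul, smul_smul, ← add_smul, mul_comm c, hab, one_smul]

theorem span_range_fromRows_diagonal_eq_top_iff (c : R) (M : Matrix n n R) :
    span R (range (fromRows (diagonal fun _ => c) M).row) = ⊤ ↔ IsCoprime c M.det := by
  rw [span_range_eq_top_iff_exists_mul_eq_one, ← exists_smul_add_mul_eq_one_iff_isCoprime]
  constructor
  · rintro ⟨B, hB⟩
    refine ⟨B.toCols₁, B.toCols₂, ?_⟩
    rw [← fromCols_toCols B, fromCols_mul_fromRows] at hB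
    simpa [← smul_one_eq_diagonal] using hB
  · rintro ⟨B₁, B₂, h⟩
    exact ⟨fromCols B₁ B₂, by simpa [fromCols_mul_fromRows, ← smul_one_eq_diagonal] using h⟩

end Matrix

section echinusF

variable {n : ℕ} (p q : Fin n → ℕ)

theorem echinusF_apply_self (i : Fin n) : echinusF n p q i i = 2 ^ p i := by
  simp [echinusF]

theorem echinusF_apply_of_val_add_one_eq {i j : Fin n} (h : (i : ℕ) + 1 = j) :
    echinusF n p q i j = -2 ^ q i := by
  have : i ≠ j := by rw [Ne, Fin.ext_iff]; omega
  simp [echinusF, this, h]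

theorem echinusF_apply_of_eq_last (hn : 2 ≤ n) {i j : Fin n} (hi : (i : ℕ) = n - 1)
    (hj : (j : ℕ) = 0) : echinusF n p q i j = 2 ^ q i := by
  have : i ≠ j := by rw [Ne, Fin.ext_iff]; omega
  simp [echinusF, this, hi, hj]

theorem echinusF_apply_eq_zero {i j : Fin n} (h₁ : (i : ℕ) ≠ j) (h₂ : (i : ℕ) + 1 ≠ j)
    (h₃ : (i : ℕ) = n - 1 → (j : ℕ) ≠ 0) : echinusF n p q i j = 0 := by
  simpa [echinusF, Fin.ext_iff, h₁, h₂] using h₃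

end echinusF

section det

variable {m : ℕ} (p q : Fin (m + 2) → ℕ)

theorem det_echinusF_submatrix_succ_succ :
    ((echinusF (m + 2) p q).submatrix Fin.succ Fin.succ).det =
      ∏ i : Fin (m + 1), 2 ^ p i.succ := by
  rw [det_of_isUpperTriangular]
  · simp [echinusF_apply_self]
  · intro i j (hij : (j : ℕ) < i)
    exact echinusF_apply_eq_zero p q (by simp; omega) (by simp; omega) (by simp)

theorem det_echinusF_submatrix_castSucc_succ :
    ((echinusF (m + 2) p q).submatrix Fin.castSucc Fin.succ).det =
      ∏ i : Fin (m + 1), -2 ^ q i.castSucc := by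
  rw [det_of_isLowerTriangular]
  · simp [echinusF_apply_of_val_add_one_eq]
  · intro i j (hij : (i : ℕ) < j)
    exact echinusF_apply_eq_zero p q (by simp; omega) (by simp; omega) (by simp)

theorem det_echinusF : (echinusF (m + 2) p q).det = 2 ^ ∑ i, p i + 2 ^ ∑ i, q i := by
  rw [det_succ_column_zero, Fintype.sum_eq_add 0 (Fin.last (m + 1)) (by simp [Fin.ext_iff])]
  · have hsign : (-1 : ℤ) ^ (m + 1) * (-1) ^ (m + 1) = 1 := by
      rw [← mul_pow, neg_one_mul, neg_neg, one_pow]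
    rw [Fin.succAbove_zero, Fin.succAbove_last, det_echinusF_submatrix_succ_succ,
      det_echinusF_submatrix_castSucc_succ, Finset.prod_neg, Fin.sum_univ_succ p,
      Fin.sum_univ_castSucc q, echinusF_apply_self,
      echinusF_apply_of_eq_last p q (by omega) (by simp) rfl]
    simp only [Finset.prod_pow_eq_pow_sum, Finset.card_univ, Fintype.card_fin, Fin.val_zero,
      Fin.val_last, pow_add]
    linear_combination 2 ^ q (Fin.last (m + 1)) * 2 ^ (∑ i : Fin (m + 1), q i.castSucc) * hsign
  · rintro i ⟨hi₀, hiₗ⟩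
    have h₀ : (i : ℕ) ≠ 0 := Fin.val_ne_iff.2 hi₀
    have hₗ : (i : ℕ) ≠ m + 1 := Fin.val_ne_iff.2 hiₗ
    rw [echinusF_apply_eq_zero p q (by simpa) (by simp) (by simp; omega), mul_zero, zero_mul]

end det

theorem odd_two_pow_add_two_pow_iff (a b : ℕ) :
    Odd ((2 : ℤ) ^ a + 2 ^ b) ↔ (a = 0 ∧ b ≠ 0) ∨ (a ≠ 0 ∧ b = 0) := by
  rw [Int.odd_add, ← Int.not_even_iff_odd, Int.even_pow, Int.even_pow]
  simp only [even_two, true_and]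
  tauto

theorem stmt15 (n : ℕ) (hn : 2 ≤ n) (p q : Fin n → ℕ) :
    Submodule.span ℤ (Set.range fun i =>
        Matrix.fromRows (Matrix.diagonal fun _ => (2 : ℤ)) (echinusF n p q) i) = ⊤ ↔
      ((∑ i, p i = 0 ∧ ∑ i, q i ≠ 0) ∨ (∑ i, p i ≠ 0 ∧ ∑ i, q i = 0)) := by
  obtain ⟨m, rfl⟩ : ∃ m, n = m + 2 := ⟨n - 2, by omega⟩
  have hspan := span_range_fromRows_diagonal_eq_top_iff (2 : ℤ) (echinusF (m + 2) p q)
  rw [Int.prime_two.coprime_iff_not_dvd, ← even_iff_two_dvd, Int.not_even_iff_odd,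
    det_echinusF, odd_two_pow_add_two_pow_iff] at hspan
  exact hspan
end
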